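/- arXiv:1407.5943 — 10 statements merged into one kernel-verified Lean document; each statement's English description precedes it below -/
import Mathlib

section
/- Let f : ℝ → ℝ be twice continuously differentiable with f(θ) > 0 and f(θ) + f''(θ) > 0 for all θ ∈ ℝ. Then for every θ ∈ ℝ and every Δθ with 0 < Δθ ≤ π/2, one has f(θ) + (f(θ + Δθ) - 2·f(θ) + f(θ - Δθ))/(2·(1 - cos Δθ)) > 0; equivalently, f(θ + Δθ) + f(θ - Δθ) > 2·cos(Δθ)·f(θ). -/
/-!
Put `v t = f (θ + t) + f (θ - t) - 2 cos t · f θ`. Then `v 0 = v' 0 = 0` and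
`v'' + v = (f + f'') (θ + t) + (f + f'') (θ - t) > 0`, so by Sturm comparison with `sin`
the function `v` stays positive on `(0, π]`: the Wronskian-type quantity
`v' t · sin (Δ - t) + v t · cos (Δ - t)` has derivative `(v'' + v) t · sin (Δ - t) > 0`
on `(0, Δ)`, vanishes at `0` and equals `v Δ` at `Δ`.
-/

open Real Set

theorem pos_of_hasDerivAt_of_second_deriv_add_self_pos {v v' v'' : ℝ → ℝ} {a b : ℝ}
    (hab : a < b) (hba : b ≤ a + π)
    (hv : ∀ t, HasDerivAt v (v' t) t) (hv' : ∀ t, HasDerivAt v' (v'' t) t)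
    (ha : v a = 0) (ha' : v' a = 0) (hpos : ∀ t ∈ Ioo a b, 0 < v'' t + v t) :
    0 < v b := by
  set Z : ℝ → ℝ := fun t => v' t * sin (b - t) + v t * cos (b - t)
  have hZ : ∀ t, HasDerivAt Z ((v'' t + v t) * sin (b - t)) t := by
    intro t
    have hb : HasDerivAt (fun t => b - t) (-1) t := (hasDerivAt_id t).const_sub b
    exact (((hv' t).mul hb.sin).add ((hv t).mul hb.cos)).congr_deriv (by ring)
  have hZmono : StrictMonoOn Z (Icc a b) := by
    refine strictMonoOn_of_deriv_pos (convex_Icc a b)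
      (fun t _ => (hZ t).continuousAt.continuousWithinAt) fun t ht => ?_
    rw [interior_Icc] at ht
    rw [(hZ t).deriv]
    exact mul_pos (hpos t ht) (sin_pos_of_pos_of_lt_pi (by linarith [ht.2]) (by linarith [ht.1]))
  simpa [Z, ha, ha'] using hZmono (left_mem_Icc.mpr hab.le) (right_mem_Icc.mpr hab.le) hab

theorem two_mul_cos_mul_lt_add_of_add_deriv_deriv_pos {f : ℝ → ℝ} (hf : ContDiff ℝ 2 f)
    (hfpp : ∀ θ, 0 < f θ + deriv (deriv f) θ) {θ Δ : ℝ} (hΔ : 0 < Δ) (hΔπ : Δ ≤ π) :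
    2 * cos Δ * f θ < f (θ + Δ) + f (θ - Δ) := by
  have hd : Differentiable ℝ f := hf.differentiable two_ne_zero
  have hd' : Differentiable ℝ (deriv f) := (hf.deriv' (n := 1)).differentiable one_ne_zero
  have hv : ∀ t, HasDerivAt (fun t => f (θ + t) + f (θ - t) - 2 * f θ * cos t)
      (deriv f (θ + t) - deriv f (θ - t) + 2 * f θ * sin t) t := fun t =>
    ((((hd _).hasDerivAt.comp_const_add θ t).add ((hd _).hasDerivAt.comp_const_sub θ t)).sub
      ((hasDerivAt_cos t).const_mul (2 * f θ))).congr_deriv (by ring)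
  have hv' : ∀ t, HasDerivAt (fun t => deriv f (θ + t) - deriv f (θ - t) + 2 * f θ * sin t)
      (deriv (deriv f) (θ + t) + deriv (deriv f) (θ - t) + 2 * f θ * cos t) t := fun t =>
    ((((hd' _).hasDerivAt.comp_const_add θ t).sub ((hd' _).hasDerivAt.comp_const_sub θ t)).add
      ((hasDerivAt_sin t).const_mul (2 * f θ))).congr_deriv (by ring)
  have hvΔ := pos_of_hasDerivAt_of_second_deriv_add_self_pos (a := 0) hΔ (by simpa using hΔπ)
    hv hv' (by simp; ring) (by simp) fun t _ => by linarith [hfpp (θ + t), hfpp (θ - t)]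
  linarith

theorem stmt0_general (f : ℝ → ℝ) (hf : ContDiff ℝ 2 f)
    (hfpp : ∀ θ : ℝ, 0 < f θ + deriv (deriv f) θ) :
    ∀ θ Δθ : ℝ, 0 < Δθ → Δθ ≤ π / 2 →
      0 < f θ + (f (θ + Δθ) - 2 * f θ + f (θ - Δθ)) / (2 * (1 - Real.cos Δθ)) ∧
      2 * Real.cos Δθ * f θ < f (θ + Δθ) + f (θ - Δθ) := by
  intro θ Δθ hΔ hΔπ
  have hlt : 2 * cos Δθ * f θ < f (θ + Δθ) + f (θ - Δθ) :=
    two_mul_cos_mul_lt_add_of_add_deriv_deriv_pos hf hfpp hΔ (by linarith [pi_pos])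
  have hcos : cos Δθ < 1 := by
    simpa using cos_lt_cos_of_nonneg_of_le_pi le_rfl (by linarith [pi_pos]) hΔ
  have hne : 1 - cos Δθ ≠ 0 := (sub_pos.mpr hcos).ne'
  refine ⟨?_, hlt⟩
  calc 0 < (f (θ + Δθ) + f (θ - Δθ) - 2 * cos Δθ * f θ) / (2 * (1 - cos Δθ)) :=
        div_pos (by linarith) (by linarith)
    _ = f θ + (f (θ + Δθ) - 2 * f θ + f (θ - Δθ)) / (2 * (1 - cos Δθ)) := by
        field_simp; ring

/-- Positivity of the discrete crystalline interfacial-energy coefficients: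
if `f > 0` and `f + f'' > 0` everywhere, then for every `θ` and every
`0 < Δθ ≤ π/2`, `f(θ) + (f(θ+Δθ) - 2 f(θ) + f(θ-Δθ))/(2 (1 - cos Δθ)) > 0`;
equivalently `f(θ+Δθ) + f(θ-Δθ) > 2 cos(Δθ) f(θ)`. -/
theorem stmt0 (f : ℝ → ℝ) (hf : ContDiff ℝ 2 f)
    (hfpos : ∀ θ : ℝ, 0 < f θ)
    (hfpp : ∀ θ : ℝ, 0 < f θ + deriv (deriv f) θ) :
    ∀ θ Δθ : ℝ, 0 < Δθ → Δθ ≤ π / 2 →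
      0 < f θ + (f (θ + Δθ) - 2 * f θ + f (θ - Δθ)) / (2 * (1 - Real.cos Δθ)) ∧
      2 * Real.cos Δθ * f θ < f (θ + Δθ) + f (θ - Δθ) :=
  stmt0_general f hf hfpp
end

section
/- Let M ≥ 2 be an integer and let p_0, p_1, …, p_M be real numbers with p_0 = p_M = 0. Then ∑_{m=0}^{M} p_m² ≤ (1/(2·(1 - cos(π/M)))) · ∑_{m=0}^{M-1} (p_{m+1} - p_m)². -/
/-!
Ground-state substitution. The sine mode `s m = sin (m π / M)` is positive inside `0 < m < M`,
vanishes at both ends and satisfies `2 s m - s (m - 1) - s (m + 1) = 2 (1 - cos (π / M)) s m`.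
Writing each `(p (m + 1) - p m)²` via Picone's identity relative to `s` and summing, the
cross terms telescope and leave `2 (1 - cos (π / M)) ∑ p m²` plus a sum of squares.
-/

open Real Finset

/-- Discrete Picone inequality: for `a, b > 0` the gap is `(b P - a Q)² / (a b)`. -/
lemma picone_sq_le {a b P Q : ℝ} (ha : 0 ≤ a) (hb : 0 ≤ b) (hP : P = 0 ∨ 0 < a)
    (hQ : Q = 0 ∨ 0 < b) :
    (1 - b / a) * P ^ 2 + (1 - a / b) * Q ^ 2 ≤ (Q - P) ^ 2 := by
  rcases hP with rfl | ha'
  · rcases hQ with rfl | hb'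
    · simp
    · have : 0 ≤ a / b := div_nonneg ha hb'.le
      nlinarith [sq_nonneg Q]
  rcases hQ with rfl | hb'
  · have : 0 ≤ b / a := div_nonneg hb ha'.le
    nlinarith [sq_nonneg P]
  have hgap : (Q - P) ^ 2 - ((1 - b / a) * P ^ 2 + (1 - a / b) * Q ^ 2)
      = (b * P - a * Q) ^ 2 / (a * b) := by
    field_simp
    ring
  have : 0 ≤ (b * P - a * Q) ^ 2 / (a * b) := by positivity
  linarith

lemma picone_step_le {lam a b c P Q : ℝ} (ha : 0 ≤ a) (hb : 0 ≤ b) (hP : P = 0 ∨ 0 < a)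
    (hQ : Q = 0 ∨ 0 < b ∧ lam * b ≤ 2 * b - a - c) :
    lam * Q ^ 2 + ((1 - b / a) * P ^ 2 - (1 - c / b) * Q ^ 2) ≤ (Q - P) ^ 2 := by
  have hcoef : lam * Q ^ 2 - (1 - c / b) * Q ^ 2 ≤ (1 - a / b) * Q ^ 2 := by
    rcases hQ with rfl | ⟨hb', heig⟩
    · simp
    · have : lam ≤ 1 - a / b + (1 - c / b) := by
        rw [← sub_nonneg]
        have : 1 - a / b + (1 - c / b) - lam = (2 * b - a - c - lam * b) / b := by
          field_simp
          ring
        rw [this]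
        exact div_nonneg (by linarith) hb'.le
      nlinarith [sq_nonneg Q]
  have := picone_sq_le ha hb hP (hQ.imp_right And.left)
  linarith

/-- A discrete Poincaré inequality from any positive supersolution `s` of `-Δ s ≥ lam s`. -/
theorem mul_sum_sq_le_sum_sq_sub_of_supersolution {M : ℕ} {s p : ℕ → ℝ} {lam : ℝ}
    (hs0 : 0 ≤ s 0) (hsM : 0 ≤ s M) (hs_pos : ∀ m, 0 < m → m < M → 0 < s m)
    (hs_super : ∀ m, m + 1 < M → lam * s (m + 1) ≤ 2 * s (m + 1) - s m - s (m + 2))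
    (hp0 : p 0 = 0) (hpM : p M = 0) :
    lam * ∑ m ∈ range (M + 1), p m ^ 2 ≤ ∑ m ∈ range M, (p (m + 1) - p m) ^ 2 := by
  -- Where `s m = 0` the quotient is junk, but only at `m = 0, M`, where `p m = 0` kills it.
  set f : ℕ → ℝ := fun m => (1 - s (m + 1) / s m) * p m ^ 2 with hf
  have hs_nonneg : ∀ m ≤ M, 0 ≤ s m := by
    intro m hm
    rcases Nat.eq_zero_or_pos m with rfl | h0
    · exact hs0
    rcases hm.lt_or_eq with hlt | rfl
    · exact (hs_pos m h0 hlt).le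
    · exact hsM
  have hedge : ∀ m ∈ range M, lam * p (m + 1) ^ 2 + (f m - f (m + 1)) ≤ (p (m + 1) - p m) ^ 2 := by
    intro m hm
    rw [mem_range] at hm
    refine picone_step_le (hs_nonneg m hm.le) (hs_nonneg (m + 1) hm) ?_ ?_
    · rcases Nat.eq_zero_or_pos m with rfl | h0
      · exact .inl hp0
      · exact .inr (hs_pos m h0 hm)
    · rcases Nat.lt_or_ge (m + 1) M with hlt | hge
      · exact .inr ⟨hs_pos (m + 1) m.succ_pos hlt, hs_super m hlt⟩
      · exact .inl (by rwa [show m + 1 = M by omega])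
  have hsum := sum_le_sum hedge
  rw [sum_add_distrib, sum_range_sub', ← mul_sum] at hsum
  rw [sum_range_succ']
  simpa [hf, hp0, hpM] using hsum

lemma sin_nat_mul_pi_div_pos {m M : ℕ} (h0 : 0 < m) (hm : m < M) : 0 < sin (m * π / M) := by
  have hM : (0 : ℝ) < M := by exact_mod_cast h0.trans hm
  apply sin_pos_of_pos_of_lt_pi (by positivity)
  rw [div_lt_iff₀ hM, mul_comm π]
  exact mul_lt_mul_of_pos_right (by exact_mod_cast hm : (m : ℝ) < M) pi_pos

lemma two_mul_one_sub_cos_mul_sin (x θ : ℝ) :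
    2 * (1 - cos θ) * sin x = 2 * sin x - sin (x - θ) - sin (x + θ) := by
  rw [sin_sub, sin_add]
  ring

lemma cos_pi_div_lt_one {M : ℕ} (hM : 0 < M) : cos (π / M) < 1 := by
  have h1 : (1 : ℝ) ≤ M := by exact_mod_cast hM
  have hpos : 0 < π / M := by positivity
  have hle : π / M ≤ π := div_le_self pi_pos.le h1
  refine (cos_le_one _).lt_of_ne fun h => hpos.ne' ?_
  exact (cos_eq_one_iff_of_lt_of_lt (by linarith) (by linarith [pi_pos])).mp h

/-- Discrete Poincaré inequality: if `p 0 = p M = 0` then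
`∑_{m=0}^{M} p_m² ≤ (1/(2(1 - cos(π/M)))) ∑_{m=0}^{M-1} (p_{m+1} - p_m)²`. -/
theorem stmt1 (M : ℕ) (hM : 2 ≤ M) (p : ℕ → ℝ) (hp0 : p 0 = 0) (hpM : p M = 0) :
    ∑ m ∈ Finset.range (M + 1), (p m) ^ 2 ≤
      (1 / (2 * (1 - Real.cos (π / M)))) *
        ∑ m ∈ Finset.range M, (p (m + 1) - p m) ^ 2 := by
  have hM0 : 0 < M := by omega
  have hlam : 0 < 2 * (1 - cos (π / M)) := by linarith [cos_pi_div_lt_one hM0]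
  have hpoincare := mul_sum_sq_le_sum_sq_sub_of_supersolution
    (s := fun m => sin (m * π / M)) (lam := 2 * (1 - cos (π / M))) (p := p)
    (by simp) (by simp [mul_div_cancel_left₀ π (Nat.cast_ne_zero.mpr hM0.ne')])
    (fun m h0 hm => sin_nat_mul_pi_div_pos h0 hm)
    (fun m _ => by
      have h := two_mul_one_sub_cos_mul_sin ((m + 1 : ℕ) * π / M) (π / M)
      rw [show ((m + 1 : ℕ) : ℝ) * π / M - π / M = m * π / M by push_cast; ring,
        show ((m + 1 : ℕ) : ℝ) * π / M + π / M = (m + 2 : ℕ) * π / M by push_cast; ring] at h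
      exact h.le)
    hp0 hpM
  rw [one_div, inv_mul_eq_div, le_div_iff₀ hlam, mul_comm]
  exact hpoincare
end

section
/- Let N ≥ 4 be an integer, Δθ = 2π/N, and let indices i be taken modulo N. Let g_i > 0 be constants and let L : I → (ZMod N → ℝ) be differentiable on an interval I with L_i(t) > 0 for all i and t. Define ω_i(t) = 2·tan(Δθ/2)·g_i / L_i(t), and suppose the side lengths satisfy L̇_i = 2·cot(Δθ)·ω_i - csc(Δθ)·(ω_{i+1} + ω_{i-1}) for all i and t. Then the weighted curvatures satisfy ω̇_i = (1/g_i)·[ω_i²·(ω_{i+1} - 2ω_i + ω_{i-1})/(2·(1 - cos Δθ)) + ω_i³] for all i and t. -/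
open Real

/-!
Writing `ωᵢ = cᵢ / Lᵢ` with `cᵢ = 2 tan(Δθ/2) gᵢ`, the chain rule gives `ω̇ᵢ = -(ωᵢ² / cᵢ) L̇ᵢ`.
After substituting the law for `L̇ᵢ`, everything follows from the half-angle identity
`tan(Δθ/2) sin Δθ = 1 - cos Δθ`: it gives `csc Δθ / (2 tan(Δθ/2)) = 1 / (2(1 - cos Δθ))` and
`cot Δθ / tan(Δθ/2) = 2 / (2(1 - cos Δθ)) - 1`.
-/

lemma Real.tan_half_mul_sin {x : ℝ} (hx : cos (x / 2) ≠ 0) :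
    tan (x / 2) * sin x = 1 - cos x := by
  have hsin : sin x = 2 * sin (x / 2) * cos (x / 2) := by
    rw [← sin_two_mul, mul_div_cancel₀ x two_ne_zero]
  have hcos : cos x = 1 - 2 * sin (x / 2) ^ 2 := by
    have h := cos_two_mul' (x / 2)
    rw [mul_div_cancel₀ x two_ne_zero] at h
    linarith [sin_sq_add_cos_sq (x / 2)]
  rw [tan_eq_sin_div_cos, hsin, hcos]
  field_simp
  ring

lemma two_pi_div_mem_Ioo {N : ℕ} (hN : 2 < N) : 2 * π / N ∈ Set.Ioo 0 π := by
  have hN' : (2 : ℝ) < N := by exact_mod_cast hN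
  refine ⟨by positivity, ?_⟩
  rw [div_lt_iff₀ (by linarith)]
  nlinarith [pi_pos]

lemma HasDerivAt.const_div {f : ℝ → ℝ} {f' t : ℝ} (k : ℝ) (hf : HasDerivAt f f' t)
    (ht : f t ≠ 0) : HasDerivAt (fun s => k / f s) (-(k / f t) ^ 2 / k * f') t := by
  refine ((hasDerivAt_const t k).fun_div hf ht).congr_deriv ?_
  rcases eq_or_ne k 0 with rfl | hk
  · simp
  · field_simp
    ring

lemma weighted_curvature_rate {θ : ℝ} (hθ : θ ∈ Set.Ioo 0 π) {g : ℝ} (hg : g ≠ 0)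
    (ω ωnext ωprev : ℝ) :
    -ω ^ 2 / (2 * tan (θ / 2) * g) *
        (2 * (cos θ / sin θ) * ω - (1 / sin θ) * (ωnext + ωprev)) =
      (1 / g) * (ω ^ 2 * (ωnext - 2 * ω + ωprev) / (2 * (1 - cos θ)) + ω ^ 3) := by
  obtain ⟨hθ0, hθπ⟩ := hθ
  have hsin : sin θ ≠ 0 := (sin_pos_of_pos_of_lt_pi hθ0 hθπ).ne'
  have htan : tan (θ / 2) ≠ 0 := (tan_pos_of_pos_of_lt_pi_div_two (by linarith) (by linarith)).ne'
  have hcos : cos (θ / 2) ≠ 0 := (cos_pos_of_mem_Ioo ⟨by linarith, by linarith⟩).ne'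
  rw [show cos θ = 1 - tan (θ / 2) * sin θ by linarith [tan_half_mul_sin hcos]]
  field_simp
  ring

theorem stmt3_general (N : ℕ) (hN : 4 ≤ N) (Δθ : ℝ) (hΔθ : Δθ = 2 * π / N)
    (g : ZMod N → ℝ) (hg : ∀ i, 0 < g i)
    (I : Set ℝ) (L L' : ℝ → ZMod N → ℝ) (ω : ℝ → ZMod N → ℝ)
    (hω : ∀ t i, ω t i = 2 * Real.tan (Δθ / 2) * g i / L t i)
    (hLpos : ∀ t ∈ I, ∀ i, 0 < L t i)
    (hL : ∀ t ∈ I, ∀ i, HasDerivAt (fun s => L s i) (L' t i) t)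
    (hL' : ∀ t ∈ I, ∀ i, L' t i =
      2 * (Real.cos Δθ / Real.sin Δθ) * ω t i
        - (1 / Real.sin Δθ) * (ω t (i + 1) + ω t (i - 1))) :
    ∀ t ∈ I, ∀ i, HasDerivAt (fun s => ω s i)
      ((1 / g i) * ((ω t i) ^ 2 * (ω t (i + 1) - 2 * ω t i + ω t (i - 1))
          / (2 * (1 - Real.cos Δθ)) + (ω t i) ^ 3)) t := by
  intro t ht i
  have hθ : Δθ ∈ Set.Ioo 0 π := hΔθ ▸ two_pi_div_mem_Ioo (by omega)
  have hderiv := (hL t ht i).const_div (2 * tan (Δθ / 2) * g i) (hLpos t ht i).ne'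
  simp only [← hω] at hderiv
  rwa [← weighted_curvature_rate hθ (hg i).ne', ← hL' t ht i]

/-- If the side lengths of the crystalline polygon evolve by
`L̇ᵢ = 2 cot(Δθ) ωᵢ - csc(Δθ)(ω_{i+1} + ω_{i-1})`, where
`ωᵢ = 2 tan(Δθ/2) gᵢ / Lᵢ`, then the weighted curvatures satisfy
`ω̇ᵢ = (1/gᵢ)[ωᵢ² (ω_{i+1} - 2ωᵢ + ω_{i-1})/(2(1 - cos Δθ)) + ωᵢ³]`. -/
theorem stmt3 (N : ℕ) [NeZero N] (hN : 4 ≤ N) (Δθ : ℝ) (hΔθ : Δθ = 2 * π / N)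
    (g : ZMod N → ℝ) (hg : ∀ i, 0 < g i)
    (I : Set ℝ) (L L' : ℝ → ZMod N → ℝ) (ω : ℝ → ZMod N → ℝ)
    (hω : ∀ t i, ω t i = 2 * Real.tan (Δθ / 2) * g i / L t i)
    (hLpos : ∀ t ∈ I, ∀ i, 0 < L t i)
    (hL : ∀ t ∈ I, ∀ i, HasDerivAt (fun s => L s i) (L' t i) t)
    (hL' : ∀ t ∈ I, ∀ i, L' t i =
      2 * (Real.cos Δθ / Real.sin Δθ) * ω t i
        - (1 / Real.sin Δθ) * (ω t (i + 1) + ω t (i - 1))) :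
    ∀ t ∈ I, ∀ i, HasDerivAt (fun s => ω s i)
      ((1 / g i) * ((ω t i) ^ 2 * (ω t (i + 1) - 2 * ω t i + ω t (i - 1))
          / (2 * (1 - Real.cos Δθ)) + (ω t i) ^ 3)) t :=
  stmt3_general N hN Δθ hΔθ g hg I L L' ω hω hLpos hL hL'
end

section
/- Let N ≥ 4 be an integer, Δθ = 2π/N, and let indices i be taken modulo N. Let d : I → (ZMod N → ℝ) be differentiable on an interval I and set ω_i(t) = -ḋ_i(t). Define L_i(t) = (d_{i+1}(t) + d_{i-1}(t))·csc(Δθ) - 2·d_i(t)·cot(Δθ) and A(t) = (1/2)·∑_{i=0}^{N-1} d_i(t)·L_i(t). Then for all t ∈ I, Ȧ(t) = - ∑_{i=0}^{N-1} ω_i(t)·L_i(t). -/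
/-!
The side lengths depend linearly on the support distances, `L = S d`, through a cyclic stencil
`S` that is symmetric for the pairing `⟨f, g⟩ = ∑ᵢ fᵢ gᵢ`: reindexing `i ↦ i + 1` turns
`∑ᵢ fᵢ g_{i-1}` into `∑ᵢ f_{i+1} gᵢ`. Hence `A = ½ ⟨d, S d⟩` has derivative `⟨ḋ, S d⟩ = -∑ᵢ ωᵢ Lᵢ`.
-/

open Real Finset

section SideLength

variable {G R : Type*} [AddGroupWithOne G] [Fintype G] [CommRing R]

def sideLength (a b : R) (d : G → R) (i : G) : R :=
  (d (i + 1) + d (i - 1)) * a - 2 * d i * b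

theorem sum_mul_sideLength (a b : R) (f g : G → R) :
    ∑ i, f i * sideLength a b g i
      = (∑ i, (f i * g (i + 1) + f (i + 1) * g i)) * a - 2 * (∑ i, f i * g i) * b := by
  have shift : ∑ i, f i * g (i - 1) = ∑ i, f (i + 1) * g i :=
    Fintype.sum_equiv (Equiv.subRight 1) _ _ fun i => by simp
  calc ∑ i, f i * sideLength a b g i
      = ∑ i, ((f i * g (i + 1) + f i * g (i - 1)) * a - 2 * (f i * g i) * b) :=
        sum_congr rfl fun i _ => by rw [sideLength]; ring
    _ = (∑ i, f i * g (i + 1) + ∑ i, f i * g (i - 1)) * a - 2 * (∑ i, f i * g i) * b := by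
        simp only [sum_sub_distrib, sum_add_distrib, ← sum_mul, ← mul_sum]
    _ = _ := by rw [shift, sum_add_distrib]

theorem sum_mul_sideLength_comm (a b : R) (f g : G → R) :
    ∑ i, f i * sideLength a b g i = ∑ i, g i * sideLength a b f i := by
  rw [sum_mul_sideLength, sum_mul_sideLength, sum_congr rfl fun i _ => mul_comm (f i) (g i),
    sum_congr rfl fun i _ => add_comm (f i * g (i + 1)) (f (i + 1) * g i)]
  simp only [mul_comm]

theorem hasDerivAt_sum_mul_sideLength {d : ℝ → G → ℝ} {d' : G → ℝ} {t : ℝ} (a b : ℝ)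
    (hd : ∀ i, HasDerivAt (fun s => d s i) (d' i) t) :
    HasDerivAt (fun s => ∑ i, d s i * sideLength a b (d s) i)
      (2 * ∑ i, d' i * sideLength a b (d t) i) t := by
  have hL : ∀ i, HasDerivAt (fun s => sideLength a b (d s) i) (sideLength a b d' i) t := fun i =>
    (((hd (i + 1)).add (hd (i - 1))).mul_const a).sub (((hd i).const_mul 2).mul_const b)
  refine (HasDerivAt.fun_sum fun i _ => (hd i).mul (hL i)).congr_deriv ?_
  rw [sum_add_distrib, sum_mul_sideLength_comm a b (d t) d']
  ring

end SideLength

theorem stmt6_general (N : ℕ) [NeZero N] (Δθ : ℝ)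
    (I : Set ℝ) (d d' : ℝ → ZMod N → ℝ)
    (hd : ∀ t ∈ I, ∀ i, HasDerivAt (fun s => d s i) (d' t i) t)
    (ω : ℝ → ZMod N → ℝ) (hω : ∀ t i, ω t i = -d' t i)
    (L : ℝ → ZMod N → ℝ)
    (hL : ∀ t i, L t i = (d t (i + 1) + d t (i - 1)) * (1 / Real.sin Δθ)
        - 2 * d t i * (Real.cos Δθ / Real.sin Δθ))
    (A : ℝ → ℝ) (hA : ∀ t, A t = (1 / 2) * ∑ i : ZMod N, d t i * L t i) :
    ∀ t ∈ I, HasDerivAt A (- ∑ i : ZMod N, ω t i * L t i) t := by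
  intro t ht
  set a := 1 / sin Δθ
  set b := cos Δθ / sin Δθ
  have hL' : ∀ s, L s = sideLength a b (d s) := fun s => funext (hL s)
  have hA' : A = fun s => 1 / 2 * ∑ i, d s i * sideLength a b (d s) i :=
    funext fun s => by rw [hA, hL']
  rw [hA']
  refine ((hasDerivAt_sum_mul_sideLength a b (hd t ht)).const_mul (1 / 2 : ℝ)).congr_deriv ?_
  simp only [hω, hL', neg_mul, sum_neg_distrib]
  ring

/-- If the support distances `dᵢ` of the polygon evolve with `ḋᵢ = -ωᵢ`, the side
lengths are `Lᵢ = (d_{i+1} + d_{i-1}) csc Δθ - 2 dᵢ cot Δθ` and the enclosed area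
is `A = (1/2) ∑ᵢ dᵢ Lᵢ`, then `Ȧ = - ∑ᵢ ωᵢ Lᵢ`. -/
theorem stmt6 (N : ℕ) [NeZero N] (hN : 4 ≤ N) (Δθ : ℝ) (hΔθ : Δθ = 2 * π / N)
    (I : Set ℝ) (d d' : ℝ → ZMod N → ℝ)
    (hd : ∀ t ∈ I, ∀ i, HasDerivAt (fun s => d s i) (d' t i) t)
    (ω : ℝ → ZMod N → ℝ) (hω : ∀ t i, ω t i = -d' t i)
    (L : ℝ → ZMod N → ℝ)
    (hL : ∀ t i, L t i = (d t (i + 1) + d t (i - 1)) * (1 / Real.sin Δθ)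
        - 2 * d t i * (Real.cos Δθ / Real.sin Δθ))
    (A : ℝ → ℝ) (hA : ∀ t, A t = (1 / 2) * ∑ i : ZMod N, d t i * L t i) :
    ∀ t ∈ I, HasDerivAt A (- ∑ i : ZMod N, ω t i * L t i) t :=
  stmt6_general N Δθ I d d' hd ω hω L hL A hA
end

section
/- Let N ≥ 4 be an integer, Δθ = 2π/N, and let indices i be taken modulo N. Let h_i > 0 be constants and let ω : [0,T] → (ZMod N → ℝ) be differentiable with ω_i(t) > 0 for all i and t, satisfying ω̇_i = h_i·[ω_i²·(ω_{i+1} - 2ω_i + ω_{i-1})/(2·(1 - cos Δθ)) + ω_i³] for all i and t. Then the function t ↦ min_{0 ≤ i ≤ N-1} ω_i(t) is nondecreasing on [0,T]. -/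
open Real

/-- Under the crystalline evolution
`ω̇ᵢ = hᵢ [ωᵢ² (ω_{i+1} - 2ωᵢ + ω_{i-1})/(2(1 - cos Δθ)) + ωᵢ³]` with `hᵢ > 0`
and `ωᵢ > 0`, the minimum weighted curvature `min_i ωᵢ(t)` is nondecreasing. -/
theorem stmt8 (N : ℕ) [NeZero N] (hN : 4 ≤ N) (Δθ : ℝ) (hΔθ : Δθ = 2 * π / N)
    (T : ℝ) (h : ZMod N → ℝ) (hh : ∀ i, 0 < h i)
    (ω : ℝ → ZMod N → ℝ)
    (hωpos : ∀ t ∈ Set.Icc (0:ℝ) T, ∀ i, 0 < ω t i)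
    (hode : ∀ t ∈ Set.Icc (0:ℝ) T, ∀ i,
      HasDerivWithinAt (fun s => ω s i)
        (h i * ((ω t i) ^ 2 * (ω t (i + 1) - 2 * ω t i + ω t (i - 1))
            / (2 * (1 - Real.cos Δθ)) + (ω t i) ^ 3))
        (Set.Icc 0 T) t) :
    MonotoneOn (fun t => Finset.univ.inf' Finset.univ_nonempty (fun i : ZMod N => ω t i))
      (Set.Icc 0 T) := by
  have hπ : (0:ℝ) < π := Real.pi_pos
  have hNpos : (0:ℝ) < N := by positivity
  -- `cos Δθ < 1`
  have hcos : Real.cos Δθ < 1 := by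
    have hΔpos : 0 < Δθ := by
      rw [hΔθ]; positivity
    have hΔle : Δθ ≤ π := by
      rw [hΔθ, div_le_iff₀ hNpos]
      nlinarith [hπ, mul_nonneg hπ.le (by
        have : (4:ℝ) ≤ N := by exact_mod_cast hN
        linarith : (0:ℝ) ≤ (N:ℝ) - 4)]
    have := Real.cos_lt_cos_of_nonneg_of_le_pi le_rfl hΔle hΔpos
    simpa using this
  have hden : 0 < 2 * (1 - Real.cos Δθ) := by linarith
  set m : ℝ → ℝ := fun t => Finset.univ.inf' Finset.univ_nonempty (fun i : ZMod N => ω t i)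
    with hm
  -- continuity of each ω i on Icc 0 T
  have hcont : ∀ i, ContinuousOn (fun s => ω s i) (Set.Icc 0 T) := fun i t ht =>
    (hode t ht i).continuousWithinAt
  have hmcont : ContinuousOn m (Set.Icc 0 T) :=
    ContinuousOn.finset_inf'_apply Finset.univ_nonempty fun i _ => hcont i
  -- positivity of the derivative at a minimizing index
  have hderivpos : ∀ t ∈ Set.Icc (0:ℝ) T, ∀ i, ω t i = m t →
      0 < h i * ((ω t i) ^ 2 * (ω t (i + 1) - 2 * ω t i + ω t (i - 1))
            / (2 * (1 - Real.cos Δθ)) + (ω t i) ^ 3) := by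
    intro t ht i hi
    have hmin : ∀ j, ω t i ≤ ω t j := by
      intro j
      rw [hi]
      exact Finset.inf'_le _ (Finset.mem_univ j)
    have h1 : ω t i ≤ ω t (i + 1) := hmin _
    have h2 : ω t i ≤ ω t (i - 1) := hmin _
    have hpos := hωpos t ht i
    have hnum : 0 ≤ ω t (i + 1) - 2 * ω t i + ω t (i - 1) := by linarith
    have : 0 ≤ (ω t i) ^ 2 * (ω t (i + 1) - 2 * ω t i + ω t (i - 1))
        / (2 * (1 - Real.cos Δθ)) := by positivity
    have hcube : 0 < (ω t i) ^ 3 := by positivity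
    exact mul_pos (hh i) (by linarith)
  -- main monotonicity
  intro a ha b hb hab
  rcases eq_or_lt_of_le hab with rfl | hab
  · exact le_rfl
  have hsub : Set.Icc a b ⊆ Set.Icc 0 T := Set.Icc_subset_Icc ha.1 hb.2
  have key : ∀ ⦃x⦄, x ∈ Set.Icc a b → -m x ≤ -m a := by
    apply image_le_of_liminf_slope_right_le_deriv_boundary
      (f := fun t => -m t) (B := fun _ => -m a) (B' := fun _ => 0)
    · exact (hmcont.mono hsub).neg
    · exact le_rfl
    · exact continuousOn_const
    · intro x _
      exact hasDerivWithinAt_const _ _ _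
    · -- the liminf slope bound
      intro x hx r hr
      have hxT : x ∈ Set.Icc (0:ℝ) T := hsub ⟨hx.1, hx.2.le⟩
      have hxb : x < b := hx.2
      -- the filter of points just to the right of x, within (x, b]
      set L : Filter ℝ := nhdsWithin x (Set.Ioc x b) with hL
      have hLeq : L = nhdsWithin x (Set.Ioi x) := nhdsWithin_Ioc_eq_nhdsGT hxb
      have hLleT : L ≤ nhdsWithin x (Set.Icc 0 T) :=
        nhdsWithin_mono _ fun z hz => hsub ⟨(hx.1.trans hz.1.le), hz.2⟩
      -- the set S of minimizing indices at x
      -- eventually, every non-minimizing index stays strictly above the min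
      have hev1 : ∀ᶠ z in L, ∀ j : ZMod N, ω x j ≠ m x → m z < ω z j := by
        rw [Filter.eventually_all]
        intro j
        by_cases hj : ω x j = m x
        · exact Filter.Eventually.of_forall fun z hz => absurd hj hz
        · have hjlt : m x < ω x j :=
            lt_of_le_of_ne (Finset.inf'_le _ (Finset.mem_univ j)) (Ne.symm hj)
          have htend : Filter.Tendsto (fun z => ω z j - m z) L (nhds (ω x j - m x)) :=
            ((hcont j x hxT).mono_left hLleT).sub ((hmcont x hxT).mono_left hLleT)
          have := htend.eventually_const_lt (by linarith : (0:ℝ) < ω x j - m x)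
          filter_upwards [this] with z hz _
          linarith
      -- eventually, the slope of every minimizing index is > -r
      have hev2 : ∀ᶠ z in L, ∀ j : ZMod N, ω x j = m x → -r < slope (fun s => ω s j) x z := by
        rw [Filter.eventually_all]
        intro j
        by_cases hj : ω x j = m x
        · have hD := hderivpos x hxT j hj
          have hslope : Filter.Tendsto (slope (fun s => ω s j) x) L
              (nhds (h j * ((ω x j) ^ 2 * (ω x (j + 1) - 2 * ω x j + ω x (j - 1))
                / (2 * (1 - Real.cos Δθ)) + (ω x j) ^ 3))) := by
            have := hasDerivWithinAt_iff_tendsto_slope.1 (hode x hxT j)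
            refine this.mono_left (nhdsWithin_mono _ fun z hz => ?_)
            exact ⟨hsub ⟨hx.1.trans hz.1.le, hz.2⟩, ne_of_gt hz.1⟩
          have := hslope.eventually_const_lt (by linarith : -r < h j * ((ω x j) ^ 2 *
            (ω x (j + 1) - 2 * ω x j + ω x (j - 1)) / (2 * (1 - Real.cos Δθ)) + (ω x j) ^ 3))
          filter_upwards [this] with z hz _
          exact hz
        · exact Filter.Eventually.of_forall fun z hz => absurd hz hj
      have hev3 : ∀ᶠ z in L, z ∈ Set.Ioc x b := eventually_mem_nhdsWithin
      have hev : ∀ᶠ z in L, slope (fun t => -m t) x z < r := by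
        filter_upwards [hev1, hev2, hev3] with z h1 h2 h3
        -- pick a minimizing index at z
        obtain ⟨j, -, hj⟩ := Finset.exists_mem_eq_inf' (Finset.univ_nonempty)
          (fun i : ZMod N => ω z i)
        have hjz : m z = ω z j := hj
        have hjS : ω x j = m x := by
          by_contra hc
          have h' := h1 j hc
          rw [hjz] at h'
          exact lt_irrefl _ h'
        have hjslope := h2 j hjS
        have hzx : 0 < z - x := by linarith [h3.1]
        rw [slope_def_field] at hjslope ⊢
        have hmx : m x = ω x j := hjS.symm
        have heq : -m z - -m x = -(ω z j - ω x j) := by rw [hjz, hmx]; ring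
        rw [heq, neg_div]
        linarith
      rw [hLeq] at hev
      exact hev.frequently
  have := key (Set.right_mem_Icc.2 hab.le)
  simpa using this
end

section
/- Let N ≥ 4 be an integer, Δθ = 2π/N, and let indices i be taken modulo N. Let h_i > 0 be constants and let ω : [0,T] → (ZMod N → ℝ) be differentiable satisfying ω̇_i = h_i·[ω_i²·(ω_{i+1} - 2ω_i + ω_{i-1})/(2·(1 - cos Δθ)) + ω_i³] for all i and t. Then for all t, d/dt ∑_{i=0}^{N-1} [ω_i² - (ω_{i+1} - ω_i)²/(2·(1 - cos Δθ))] = 2·∑_{i=0}^{N-1} h_i·ω_i²·[ω_i + (ω_{i+1} - 2ω_i + ω_{i-1})/(2·(1 - cos Δθ))]² ≥ 0. In particular, ∑_{i=0}^{N-1} (ω_{i+1}(t) - ω_i(t))²/(2·(1 - cos Δθ)) - ∑_{i=0}^{N-1} ω_i(t)² is a nonincreasing function of t. -/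
/-!
Summation by parts on the cycle turns the derivative of
`E = ∑ᵢ [ωᵢ² - (ω_{i+1} - ωᵢ)² / c]` into `2 ∑ᵢ ω̇ᵢ (ωᵢ + (Δω)ᵢ / c)`, where `Δ` is the discrete
Laplacian. The crystalline evolution reads `ω̇ᵢ = hᵢ ωᵢ² (ωᵢ + (Δω)ᵢ / c)`, so this derivative is
the sum of squares `2 ∑ᵢ hᵢ ωᵢ² (ωᵢ + (Δω)ᵢ / c)²`, nonnegative since `hᵢ > 0`.
-/

open Real

section DiscreteCycle

variable {G : Type*} [AddCommGroup G] [Fintype G] (a : G)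

def discreteLaplacian (v : G → ℝ) (i : G) : ℝ :=
  v (i + a) - 2 * v i + v (i - a)

noncomputable def gageHamiltonEnergy (c : ℝ) (w : G → ℝ) : ℝ :=
  ∑ i, (w i ^ 2 - (w (i + a) - w i) ^ 2 / c)

theorem sum_comp_add_right (f : G → ℝ) : ∑ i, f (i + a) = ∑ i, f i :=
  Fintype.sum_equiv (Equiv.addRight a) _ _ fun _ => rfl

theorem sum_sub_mul_sub_eq_neg_sum_mul_discreteLaplacian (u v : G → ℝ) :
    ∑ i, (u (i + a) - u i) * (v (i + a) - v i) = -∑ i, u i * discreteLaplacian a v i := by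
  have hdiag := sum_comp_add_right a fun i => u i * v i
  have hshift := sum_comp_add_right a fun i => u i * v (i - a)
  simp only [add_sub_cancel_right] at hshift
  rw [eq_neg_iff_add_eq_zero, ← Finset.sum_add_distrib]
  calc ∑ i, ((u (i + a) - u i) * (v (i + a) - v i) + u i * discreteLaplacian a v i)
      = ∑ i, ((u (i + a) * v (i + a) - u i * v i) - (u (i + a) * v i - u i * v (i - a))) :=
        Finset.sum_congr rfl fun i _ => by unfold discreteLaplacian; ring
    _ = 0 := by simp only [Finset.sum_sub_distrib, hdiag, hshift, sub_self]

theorem hasDerivWithinAt_gageHamiltonEnergy (c : ℝ) {ω : ℝ → G → ℝ} {ω' : G → ℝ} {s : Set ℝ}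
    {t : ℝ} (hω : ∀ i, HasDerivWithinAt (fun τ => ω τ i) (ω' i) s t) :
    HasDerivWithinAt (fun τ => gageHamiltonEnergy a c (ω τ))
      (2 * ∑ i, ω' i * (ω t i + discreteLaplacian a (ω t) i / c)) s t := by
  have hsum : HasDerivWithinAt (fun τ => gageHamiltonEnergy a c (ω τ))
      (∑ i, (2 * ω t i * ω' i - 2 * (ω t (i + a) - ω t i) * (ω' (i + a) - ω' i) / c)) s t := by
    refine HasDerivWithinAt.fun_sum fun i _ => ?_
    have hsq := (hω i).fun_pow 2
    have hdiff := (((hω (i + a)).sub (hω i)).fun_pow 2).div_const c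
    simpa using hsq.fun_sub hdiff
  refine hsum.congr_deriv ?_
  have hparts := sum_sub_mul_sub_eq_neg_sum_mul_discreteLaplacian a ω' (ω t)
  calc ∑ i, (2 * ω t i * ω' i - 2 * (ω t (i + a) - ω t i) * (ω' (i + a) - ω' i) / c)
      = 2 * ∑ i, ω' i * ω t i
          - 2 / c * ∑ i, (ω' (i + a) - ω' i) * (ω t (i + a) - ω t i) := by
        rw [Finset.sum_sub_distrib, Finset.mul_sum, Finset.mul_sum]
        congr 1 <;> exact Finset.sum_congr rfl fun i _ => by ring
    _ = 2 * ∑ i, ω' i * (ω t i + discreteLaplacian a (ω t) i / c) := by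
        rw [hparts, mul_neg, sub_neg_eq_add, Finset.mul_sum, Finset.mul_sum, Finset.mul_sum,
          ← Finset.sum_add_distrib]
        exact Finset.sum_congr rfl fun i _ => by ring

end DiscreteCycle

theorem monotoneOn_Icc_of_hasDerivWithinAt_nonneg {f f' : ℝ → ℝ} {a b : ℝ}
    (hf : ∀ t ∈ Set.Icc a b, HasDerivWithinAt f (f' t) (Set.Icc a b) t)
    (hf' : ∀ t ∈ Set.Icc a b, 0 ≤ f' t) : MonotoneOn f (Set.Icc a b) :=
  monotoneOn_of_hasDerivWithinAt_nonneg (convex_Icc a b)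
    (fun t ht => (hf t ht).continuousWithinAt)
    (fun t ht => (hf t (interior_subset ht)).mono interior_subset)
    (fun t ht => hf' t (interior_subset ht))

theorem stmt9_general (N : ℕ) [NeZero N] (Δθ : ℝ)
    (T : ℝ) (h : ZMod N → ℝ) (hh : ∀ i, 0 < h i)
    (ω : ℝ → ZMod N → ℝ)
    (hode : ∀ t ∈ Set.Icc (0:ℝ) T, ∀ i,
      HasDerivWithinAt (fun s => ω s i)
        (h i * ((ω t i) ^ 2 * (ω t (i + 1) - 2 * ω t i + ω t (i - 1))
            / (2 * (1 - Real.cos Δθ)) + (ω t i) ^ 3))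
        (Set.Icc 0 T) t) :
    (∀ t ∈ Set.Icc (0:ℝ) T,
      HasDerivWithinAt
        (fun s => ∑ i : ZMod N,
          ((ω s i) ^ 2 - (ω s (i + 1) - ω s i) ^ 2 / (2 * (1 - Real.cos Δθ))))
        (2 * ∑ i : ZMod N, h i * (ω t i) ^ 2 *
          (ω t i + (ω t (i + 1) - 2 * ω t i + ω t (i - 1))
              / (2 * (1 - Real.cos Δθ))) ^ 2)
        (Set.Icc 0 T) t ∧
      0 ≤ 2 * ∑ i : ZMod N, h i * (ω t i) ^ 2 *
          (ω t i + (ω t (i + 1) - 2 * ω t i + ω t (i - 1))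
              / (2 * (1 - Real.cos Δθ))) ^ 2) ∧
    AntitoneOn
      (fun t => ∑ i : ZMod N, (ω t (i + 1) - ω t i) ^ 2 / (2 * (1 - Real.cos Δθ))
        - ∑ i : ZMod N, (ω t i) ^ 2)
      (Set.Icc 0 T) := by
  set c := 2 * (1 - Real.cos Δθ)
  have hderiv (t) (ht : t ∈ Set.Icc 0 T) :
      HasDerivWithinAt (fun s => gageHamiltonEnergy 1 c (ω s))
        (2 * ∑ i, h i * ω t i ^ 2 * (ω t i + discreteLaplacian 1 (ω t) i / c) ^ 2)
        (Set.Icc 0 T) t :=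
    (hasDerivWithinAt_gageHamiltonEnergy 1 c (hode t ht)).congr_deriv <| by
      simp only [discreteLaplacian, Finset.mul_sum]
      exact Finset.sum_congr rfl fun i _ => by ring
  have hrate (t) : 0 ≤ 2 * ∑ i, h i * ω t i ^ 2 * (ω t i + discreteLaplacian 1 (ω t) i / c) ^ 2 :=
    mul_nonneg zero_le_two <| Finset.sum_nonneg fun i _ => by have := (hh i).le; positivity
  refine ⟨fun t ht => ⟨hderiv t ht, hrate t⟩, ?_⟩
  have hmono := monotoneOn_Icc_of_hasDerivWithinAt_nonneg hderiv fun t _ => hrate t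
  convert hmono.neg using 2 with t
  simp only [gageHamiltonEnergy, Finset.sum_sub_distrib]
  ring

/-- Under the crystalline evolution, the quantity
`∑ᵢ [ωᵢ² - (ω_{i+1} - ωᵢ)²/(2(1 - cos Δθ))]` has derivative
`2 ∑ᵢ hᵢ ωᵢ² [ωᵢ + (ω_{i+1} - 2ωᵢ + ω_{i-1})/(2(1 - cos Δθ))]² ≥ 0`;
in particular `∑ᵢ (ω_{i+1} - ωᵢ)²/(2(1 - cos Δθ)) - ∑ᵢ ωᵢ²` is nonincreasing. -/
theorem stmt9 (N : ℕ) [NeZero N] (hN : 4 ≤ N) (Δθ : ℝ) (hΔθ : Δθ = 2 * π / N)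
    (T : ℝ) (h : ZMod N → ℝ) (hh : ∀ i, 0 < h i)
    (ω : ℝ → ZMod N → ℝ)
    (hode : ∀ t ∈ Set.Icc (0:ℝ) T, ∀ i,
      HasDerivWithinAt (fun s => ω s i)
        (h i * ((ω t i) ^ 2 * (ω t (i + 1) - 2 * ω t i + ω t (i - 1))
            / (2 * (1 - Real.cos Δθ)) + (ω t i) ^ 3))
        (Set.Icc 0 T) t) :
    (∀ t ∈ Set.Icc (0:ℝ) T,
      HasDerivWithinAt
        (fun s => ∑ i : ZMod N,
          ((ω s i) ^ 2 - (ω s (i + 1) - ω s i) ^ 2 / (2 * (1 - Real.cos Δθ))))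
        (2 * ∑ i : ZMod N, h i * (ω t i) ^ 2 *
          (ω t i + (ω t (i + 1) - 2 * ω t i + ω t (i - 1))
              / (2 * (1 - Real.cos Δθ))) ^ 2)
        (Set.Icc 0 T) t ∧
      0 ≤ 2 * ∑ i : ZMod N, h i * (ω t i) ^ 2 *
          (ω t i + (ω t (i + 1) - 2 * ω t i + ω t (i - 1))
              / (2 * (1 - Real.cos Δθ))) ^ 2) ∧
    AntitoneOn
      (fun t => ∑ i : ZMod N, (ω t (i + 1) - ω t i) ^ 2 / (2 * (1 - Real.cos Δθ))
        - ∑ i : ZMod N, (ω t i) ^ 2)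
      (Set.Icc 0 T) :=
  stmt9_general N Δθ T h hh ω hode
end

section
/- Let N ≥ 4 be an integer, Δθ = 2π/N, and let indices i be taken modulo N. Let g_i > 0 be constants and let ω : [0,T] → (ZMod N → ℝ) be differentiable with ω_i(t) > 0 satisfying ω̇_i = (1/g_i)·[ω_i²·(ω_{i+1} - 2ω_i + ω_{i-1})/(2·(1 - cos Δθ)) + ω_i³] for all i and t. Then for all t, d/dt ∑_{i=0}^{N-1} g_i·ln(ω_i(t)) = ∑_{i=0}^{N-1} [ω_i(t)² - (ω_{i+1}(t) - ω_i(t))²/(2·(1 - cos Δθ))]. -/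
/-!
Along the flow, `d/dt (gᵢ ln ωᵢ) = gᵢ ω̇ᵢ / ωᵢ = ωᵢ (Δω)ᵢ / c + ωᵢ²` with `c = 2(1 - cos Δθ)` and
`(Δω)ᵢ = ω_{i+1} - 2ωᵢ + ω_{i-1}`; summation by parts on the cycle `ZMod N` turns
`∑ ωᵢ (Δω)ᵢ` into `-∑ (ω_{i+1} - ωᵢ)²`.
-/

open Finset Real

theorem sum_mul_second_difference_eq_neg_sum_sq {G R : Type*} [AddCommGroup G] [Fintype G]
    [CommRing R] (f : G → R) (a : G) :
    ∑ i, f i * (f (i + a) - 2 * f i + f (i - a)) = -∑ i, (f (i + a) - f i) ^ 2 := by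
  have hsq : ∑ i, f (i + a) ^ 2 = ∑ i, f i ^ 2 :=
    Fintype.sum_equiv (Equiv.addRight a) _ _ fun _ => rfl
  have hprod : ∑ i, f i * f (i - a) = ∑ i, f (i + a) * f i :=
    Fintype.sum_equiv (Equiv.subRight a) _ _ fun i => by simp
  have lhs : ∑ i, f i * (f (i + a) - 2 * f i + f (i - a))
      = ∑ i, f (i + a) * f i + ∑ i, f i * f (i - a) - 2 * ∑ i, f i ^ 2 := by
    simp only [mul_sum, ← sum_add_distrib, ← sum_sub_distrib]
    exact sum_congr rfl fun _ _ => by ring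
  have rhs : ∑ i, (f (i + a) - f i) ^ 2
      = ∑ i, f (i + a) ^ 2 + ∑ i, f i ^ 2 - 2 * ∑ i, f (i + a) * f i := by
    simp only [mul_sum, ← sum_add_distrib, ← sum_sub_distrib]
    exact sum_congr rfl fun _ _ => by ring
  rw [lhs, rhs, hsq, hprod]
  ring

theorem HasDerivWithinAt.const_mul_log_of_crystalline {w : ℝ → ℝ} {s : Set ℝ} {t g L c : ℝ}
    (hg : g ≠ 0) (hw : w t ≠ 0)
    (h : HasDerivWithinAt w ((1 / g) * (w t ^ 2 * L / c + w t ^ 3)) s t) :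
    HasDerivWithinAt (fun s => g * Real.log (w s)) (w t * L / c + w t ^ 2) s t := by
  refine ((h.log hw).const_mul g).congr_deriv ?_
  field_simp

theorem stmt10_general (N : ℕ) [NeZero N] (Δθ : ℝ)
    (T : ℝ) (g : ZMod N → ℝ) (hg : ∀ i, 0 < g i)
    (ω : ℝ → ZMod N → ℝ)
    (hωpos : ∀ t ∈ Set.Icc (0:ℝ) T, ∀ i, 0 < ω t i)
    (hode : ∀ t ∈ Set.Icc (0:ℝ) T, ∀ i,
      HasDerivWithinAt (fun s => ω s i)
        ((1 / g i) * ((ω t i) ^ 2 * (ω t (i + 1) - 2 * ω t i + ω t (i - 1))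
            / (2 * (1 - Real.cos Δθ)) + (ω t i) ^ 3))
        (Set.Icc 0 T) t) :
    ∀ t ∈ Set.Icc (0:ℝ) T,
      HasDerivWithinAt (fun s => ∑ i : ZMod N, g i * Real.log (ω s i))
        (∑ i : ZMod N,
          ((ω t i) ^ 2 - (ω t (i + 1) - ω t i) ^ 2 / (2 * (1 - Real.cos Δθ))))
        (Set.Icc 0 T) t := by
  intro t ht
  have hterm := fun i =>
    (hode t ht i).const_mul_log_of_crystalline (hg i).ne' (hωpos t ht i).ne'
  refine (HasDerivWithinAt.fun_sum fun i _ => hterm i).congr_deriv ?_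
  rw [sum_add_distrib, ← sum_div, sum_mul_second_difference_eq_neg_sum_sq (ω t),
    sum_sub_distrib, ← sum_div]
  ring

/-- The discrete entropy identity: under the crystalline evolution with `gᵢ > 0`
and `ωᵢ > 0`,
`d/dt ∑ᵢ gᵢ ln ωᵢ = ∑ᵢ [ωᵢ² - (ω_{i+1} - ωᵢ)²/(2(1 - cos Δθ))]`. -/
theorem stmt10 (N : ℕ) [NeZero N] (hN : 4 ≤ N) (Δθ : ℝ) (hΔθ : Δθ = 2 * π / N)
    (T : ℝ) (g : ZMod N → ℝ) (hg : ∀ i, 0 < g i)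
    (ω : ℝ → ZMod N → ℝ)
    (hωpos : ∀ t ∈ Set.Icc (0:ℝ) T, ∀ i, 0 < ω t i)
    (hode : ∀ t ∈ Set.Icc (0:ℝ) T, ∀ i,
      HasDerivWithinAt (fun s => ω s i)
        ((1 / g i) * ((ω t i) ^ 2 * (ω t (i + 1) - 2 * ω t i + ω t (i - 1))
            / (2 * (1 - Real.cos Δθ)) + (ω t i) ^ 3))
        (Set.Icc 0 T) t) :
    ∀ t ∈ Set.Icc (0:ℝ) T,
      HasDerivWithinAt (fun s => ∑ i : ZMod N, g i * Real.log (ω s i))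
        (∑ i : ZMod N,
          ((ω t i) ^ 2 - (ω t (i + 1) - ω t i) ^ 2 / (2 * (1 - Real.cos Δθ))))
        (Set.Icc 0 T) t :=
  stmt10_general N Δθ T g hg ω hωpos hode
end

section
/- Let N ≥ 4 be an integer, Δθ = 2π/N, let ω : ZMod N → ℝ, let δ > 0, and let m be an index and k an integer with 0 ≤ k ≤ N and k·Δθ ≤ δ. Then ω_{m+k} ≤ ω_m + √δ · ( ∑_{i=0}^{N-1} (ω_{i+1} - ω_i)²/(2·(1 - cos Δθ)) · Δθ )^{1/2}. -/
open Real

/-- Discrete Sobolev-type estimate: for `ω : ZMod N → ℝ`, `δ > 0`, and an index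
`m` and `0 ≤ k ≤ N` with `k Δθ ≤ δ`,
`ω_{m+k} ≤ ω_m + √δ · (∑ᵢ (ω_{i+1} - ωᵢ)²/(2(1 - cos Δθ)) · Δθ)^{1/2}`. -/
theorem stmt13 (N : ℕ) [NeZero N] (hN : 4 ≤ N) (Δθ : ℝ) (hΔθ : Δθ = 2 * π / N)
    (ω : ZMod N → ℝ) (δ : ℝ) (hδ : 0 < δ)
    (m : ZMod N) (k : ℕ) (hk : k ≤ N) (hkδ : (k : ℝ) * Δθ ≤ δ) :
    ω (m + (k : ZMod N)) ≤ ω m + Real.sqrt δ *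
      Real.sqrt (∑ i : ZMod N,
        (ω (i + 1) - ω i) ^ 2 / (2 * (1 - Real.cos Δθ)) * Δθ) := by
  have hNpos : (0:ℝ) < N := by positivity
  have hθpos : 0 < Δθ := by
    rw [hΔθ]; positivity
  have hθle : Δθ ≤ π / 2 := by
    rw [hΔθ, div_le_div_iff₀ hNpos two_pos]
    have : (4:ℝ) ≤ N := by exact_mod_cast hN
    nlinarith [pi_pos]
  have hcos : Real.cos Δθ < 1 := by
    have := Real.cos_lt_cos_of_nonneg_of_le_pi le_rfl
      (hθle.trans (by linarith [pi_pos])) hθpos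
    simpa using this
  have hc : 0 < 2 * (1 - Real.cos Δθ) := by linarith
  -- 2(1 - cos Δθ) ≤ Δθ²
  have hc2 : 2 * (1 - Real.cos Δθ) ≤ Δθ ^ 2 := by
    have := Real.one_sub_sq_div_two_le_cos (x := Δθ)
    linarith
  set S : ℝ := ∑ i : ZMod N, (ω (i + 1) - ω i) ^ 2 with hS
  have hSnn : 0 ≤ S := Finset.sum_nonneg fun i _ => sq_nonneg _
  -- telescoping
  have htel : ω (m + (k : ZMod N)) - ω m
      = ∑ j ∈ Finset.range k, (ω (m + (j:ℕ) + 1) - ω (m + (j:ℕ))) := by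
    calc ω (m + (k : ZMod N)) - ω m
        = (fun j : ℕ => ω (m + (j:ℕ))) k - (fun j : ℕ => ω (m + (j:ℕ))) 0 := by simp
      _ = ∑ j ∈ Finset.range k, ((fun j : ℕ => ω (m + (j:ℕ))) (j+1)
            - (fun j : ℕ => ω (m + (j:ℕ))) j) :=
          (Finset.sum_range_sub (fun j : ℕ => ω (m + (j:ℕ))) k).symm
      _ = _ := Finset.sum_congr rfl fun j _ => by push_cast; ring_nf
  -- Cauchy-Schwarz
  have hCS : (ω (m + (k : ZMod N)) - ω m) ^ 2
      ≤ (k : ℝ) * ∑ j ∈ Finset.range k, (ω (m + (j:ℕ) + 1) - ω (m + (j:ℕ))) ^ 2 := by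
    rw [htel]
    have := sq_sum_le_card_mul_sum_sq
      (s := Finset.range k) (f := fun j => ω (m + (j:ℕ) + 1) - ω (m + (j:ℕ)))
    simpa using this
  -- the partial sum of squares is at most S
  have hsub : ∑ j ∈ Finset.range k, (ω (m + (j:ℕ) + 1) - ω (m + (j:ℕ))) ^ 2 ≤ S := by
    have hinj : Set.InjOn (fun j : ℕ => m + (j : ZMod N)) (Finset.range k) := by
      intro a ha b hb hab
      simp only [Finset.coe_range, Set.mem_Iio] at ha hb
      have : (a : ZMod N) = (b : ZMod N) := by
        have := add_left_cancel hab
        exact this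
      have := congrArg ZMod.val this
      rwa [ZMod.val_natCast_of_lt (lt_of_lt_of_le ha hk),
        ZMod.val_natCast_of_lt (lt_of_lt_of_le hb hk)] at this
    calc ∑ j ∈ Finset.range k, (ω (m + (j:ℕ) + 1) - ω (m + (j:ℕ))) ^ 2
        = ∑ i ∈ (Finset.range k).image (fun j : ℕ => m + (j : ZMod N)),
            (ω (i + 1) - ω i) ^ 2 := by
          rw [Finset.sum_image (fun a ha b hb h => hinj ha hb h)]
      _ ≤ S := Finset.sum_le_sum_of_subset_of_nonneg (Finset.subset_univ _)
          (fun i _ _ => sq_nonneg _)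
  -- combine
  have key : ω (m + (k : ZMod N)) - ω m ≤ Real.sqrt ((k : ℝ) * S) := by
    have h1 : (ω (m + (k : ZMod N)) - ω m) ^ 2 ≤ (k : ℝ) * S :=
      hCS.trans (by
        have : (0:ℝ) ≤ (k:ℝ) := Nat.cast_nonneg k
        exact mul_le_mul_of_nonneg_left hsub this)
    calc ω (m + (k : ZMod N)) - ω m ≤ |ω (m + (k : ZMod N)) - ω m| := le_abs_self _
      _ = Real.sqrt ((ω (m + (k : ZMod N)) - ω m) ^ 2) := (Real.sqrt_sq_eq_abs _).symm
      _ ≤ Real.sqrt ((k : ℝ) * S) := Real.sqrt_le_sqrt h1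
  have hsum_eq : ∑ i : ZMod N, (ω (i + 1) - ω i) ^ 2 / (2 * (1 - Real.cos Δθ)) * Δθ
      = S * (Δθ / (2 * (1 - Real.cos Δθ))) := by
    rw [hS, Finset.sum_mul]
    exact Finset.sum_congr rfl fun i _ => by ring
  have hfin : Real.sqrt ((k : ℝ) * S)
      ≤ Real.sqrt δ * Real.sqrt (S * (Δθ / (2 * (1 - Real.cos Δθ)))) := by
    rw [← Real.sqrt_mul hδ.le]
    apply Real.sqrt_le_sqrt
    have hk2 : (k : ℝ) ≤ δ / Δθ := (le_div_iff₀ hθpos).mpr hkδ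
    have h4 : 1 / Δθ ≤ Δθ / (2 * (1 - Real.cos Δθ)) := by
      rw [div_le_div_iff₀ hθpos hc]; nlinarith
    have h3 : δ / Δθ ≤ δ * (Δθ / (2 * (1 - Real.cos Δθ))) := by
      calc δ / Δθ = δ * (1 / Δθ) := by ring
        _ ≤ _ := mul_le_mul_of_nonneg_left h4 hδ.le
    nlinarith [mul_le_mul_of_nonneg_right (hk2.trans h3) hSnn]
  rw [hsum_eq]
  linarith [key.trans hfin]
end

section
/- Let N ≥ 4 be an integer, Δθ = 2π/N, and let indices i be taken modulo N. Let b ≥ 0 and ε ≥ 0 be constants, and let Λ : [0,T] → (ZMod N → ℝ) be differentiable such that for all t ∈ [0,T] and all i, Λ̇_i(t) = a_i(t)·(Λ_{i+1}(t) - 2·Λ_i(t) + Λ_{i-1}(t)) + b_i(t)·Λ_i(t) + E_i(t), where a_i(t) ≥ 0, |b_i(t)| ≤ b, and |E_i(t)| ≤ ε. Then for all t ∈ [0,T], max_{0 ≤ i ≤ N-1} |Λ_i(t)| ≤ (max_{0 ≤ i ≤ N-1} |Λ_i(0)|)·e^{b·t} + ε·t·e^{b·t}. -/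
/-!
Let `M(t) = maxᵢ |Λᵢ(t)|`. At an index where `Λᵢ(t) = ±M(t)` the second difference
`Λᵢ₊₁ - 2Λᵢ + Λᵢ₋₁` has the sign opposite to `Λᵢ`, so the coupling term can only decrease `|Λᵢ|`
and the right derivative of `|Λᵢ|` is at most `b M + ε`; indices with `|Λᵢ(t)| < M(t)` do not
matter for a short time. Hence the right Dini derivative of `M` is at most `b M + ε`, and
Gronwall's inequality gives `M(t) ≤ M(0) e^{bt} + ε ∫₀ᵗ e^{bs} ds ≤ M(0) e^{bt} + ε t e^{bt}`.
-/

open Filter Topology Set Real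

section DiniDerivative

variable {g : ℝ → ℝ} {d x M r : ℝ}

lemma eventually_lt_add_mul_sub_of_hasDerivWithinAt (hg : HasDerivWithinAt g d (Ioi x) x)
    (hgM : g x ≤ M) (hd : g x = M → d < r) :
    ∀ᶠ z in 𝓝[>] x, g z < M + r * (z - x) := by
  rcases hgM.lt_or_eq with hlt | heq
  · have hline : Tendsto (fun z => M + r * (z - x)) (𝓝[>] x) (𝓝 M) :=
      (Continuous.tendsto' (by fun_prop) x M (by simp)).mono_left nhdsWithin_le_nhds
    exact hg.continuousWithinAt.eventually_lt hline hlt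
  · filter_upwards [hg.limsup_slope_le' (lt_irrefl x) (hd heq), self_mem_nhdsWithin]
      with z hslope hxz
    rw [slope_def_field, div_lt_iff₀ (sub_pos.2 hxz)] at hslope
    linarith

lemma eventually_abs_lt_add_mul_sub_of_hasDerivWithinAt (hg : HasDerivWithinAt g d (Ioi x) x)
    (hgM : |g x| ≤ M) (hpos : g x = M → d < r) (hneg : -g x = M → -d < r) :
    ∀ᶠ z in 𝓝[>] x, |g z| < M + r * (z - x) := by
  filter_upwards [eventually_lt_add_mul_sub_of_hasDerivWithinAt hg ((le_abs_self _).trans hgM) hpos,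
    eventually_lt_add_mul_sub_of_hasDerivWithinAt hg.neg ((neg_le_abs _).trans hgM) hneg]
    with z hz (hz' : -g z < M + r * (z - x))
  exact abs_lt.2 ⟨by linarith, hz⟩

end DiniDerivative

section SupAbs

variable {ι : Type*} [Fintype ι] [Nonempty ι]

def supAbs (v : ι → ℝ) : ℝ :=
  Finset.univ.sup' Finset.univ_nonempty fun i => |v i|

lemma abs_le_supAbs (v : ι → ℝ) (i : ι) : |v i| ≤ supAbs v :=
  Finset.le_sup' (fun i => |v i|) (Finset.mem_univ i)

lemma supAbs_nonneg (v : ι → ℝ) : 0 ≤ supAbs v :=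
  (abs_nonneg _).trans (abs_le_supAbs v (Classical.arbitrary ι))

lemma supAbs_lt_iff {v : ι → ℝ} {c : ℝ} : supAbs v < c ↔ ∀ i, |v i| < c := by
  simp [supAbs, Finset.sup'_lt_iff]

lemma ContinuousOn.supAbs {Λ : ℝ → ι → ℝ} {s : Set ℝ}
    (hΛ : ∀ i, ContinuousOn (fun t => Λ t i) s) : ContinuousOn (fun t => supAbs (Λ t)) s :=
  ContinuousOn.finset_sup'_apply _ fun i _ => (hΛ i).abs

lemma eventually_supAbs_slope_lt {Λ : ℝ → ι → ℝ} {d : ι → ℝ} {x r : ℝ}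
    (hΛ : ∀ i, HasDerivWithinAt (fun t => Λ t i) (d i) (Ioi x) x)
    (hpos : ∀ i, Λ x i = supAbs (Λ x) → d i < r)
    (hneg : ∀ i, -Λ x i = supAbs (Λ x) → -d i < r) :
    ∀ᶠ z in 𝓝[>] x, (z - x)⁻¹ * (supAbs (Λ z) - supAbs (Λ x)) < r := by
  have hcoord := eventually_all.2 fun i =>
    eventually_abs_lt_add_mul_sub_of_hasDerivWithinAt (hΛ i) (abs_le_supAbs _ i) (hpos i) (hneg i)
  filter_upwards [hcoord, self_mem_nhdsWithin] with z hz hxz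
  rw [inv_mul_lt_iff₀ (sub_pos.2 hxz)]
  linarith [supAbs_lt_iff.2 hz]

end SupAbs

lemma mul_secondDiff_add_le_of_eq_max {α β e vi vj vk M b ε : ℝ} (hα : 0 ≤ α) (hβ : |β| ≤ b)
    (he : |e| ≤ ε) (hM : 0 ≤ M) (hi : vi = M) (hj : vj ≤ M) (hk : vk ≤ M) :
    α * (vj - 2 * vi + vk) + β * vi + e ≤ b * M + ε := by
  subst hi
  have hcoupling : α * (vj - 2 * vi + vk) ≤ 0 := mul_nonpos_of_nonneg_of_nonpos hα (by linarith)
  have hzeroth : β * vi ≤ b * vi :=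
    mul_le_mul_of_nonneg_right ((le_abs_self β).trans hβ) hM
  linarith [le_of_abs_le he]

lemma exp_sub_one_le_mul_exp (y : ℝ) : exp y - 1 ≤ y * exp y := by
  have h := mul_le_mul_of_nonneg_right (one_sub_le_exp_neg y) (exp_pos y).le
  rw [← exp_add, neg_add_cancel, exp_zero] at h
  linarith

lemma gronwallBound_le_mul_exp_add {δ K ε : ℝ} (hK : 0 ≤ K) (hε : 0 ≤ ε) (x : ℝ) :
    gronwallBound δ K ε x ≤ δ * exp (K * x) + ε * x * exp (K * x) := by
  rcases hK.eq_or_lt with rfl | hKpos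
  · simp [gronwallBound_K0]
  rw [gronwallBound_of_K_ne_0 hKpos.ne', add_le_add_iff_left, div_mul_eq_mul_div,
    div_le_iff₀ hKpos]
  linarith [mul_le_mul_of_nonneg_left (exp_sub_one_le_mul_exp (K * x)) hε]

theorem stmt14_general (N : ℕ) [NeZero N]
    (T b ε : ℝ) (hb : 0 ≤ b) (hε : 0 ≤ ε)
    (Λ a bf E : ℝ → ZMod N → ℝ)
    (ha : ∀ t ∈ Set.Icc (0:ℝ) T, ∀ i, 0 ≤ a t i)
    (hbf : ∀ t ∈ Set.Icc (0:ℝ) T, ∀ i, |bf t i| ≤ b)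
    (hE : ∀ t ∈ Set.Icc (0:ℝ) T, ∀ i, |E t i| ≤ ε)
    (hode : ∀ t ∈ Set.Icc (0:ℝ) T, ∀ i,
      HasDerivWithinAt (fun s => Λ s i)
        (a t i * (Λ t (i + 1) - 2 * Λ t i + Λ t (i - 1)) + bf t i * Λ t i + E t i)
        (Set.Icc 0 T) t) :
    ∀ t ∈ Set.Icc (0:ℝ) T,
      Finset.univ.sup' Finset.univ_nonempty (fun i : ZMod N => |Λ t i|) ≤
        Finset.univ.sup' Finset.univ_nonempty (fun i : ZMod N => |Λ 0 i|)
            * Real.exp (b * t)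
          + ε * t * Real.exp (b * t) := by
  have hcont : ContinuousOn (fun t => supAbs (Λ t)) (Icc 0 T) :=
    ContinuousOn.supAbs fun i t ht => (hode t ht i).continuousWithinAt
  have hdini : ∀ x ∈ Ico 0 T, ∀ r, b * supAbs (Λ x) + ε < r →
      ∃ᶠ z in 𝓝[>] x, (z - x)⁻¹ * (supAbs (Λ z) - supAbs (Λ x)) < r := by
    intro x hx r hr
    have hxI := Ico_subset_Icc_self hx
    have hle : ∀ j, |Λ x j| ≤ supAbs (Λ x) := abs_le_supAbs (Λ x)
    refine (eventually_supAbs_slope_lt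
      (fun i => (hode x hxI i).mono_of_mem_nhdsWithin (Icc_mem_nhdsGT_of_mem hx))
      (fun i hi => ?_) (fun i hi => ?_)).frequently
    · exact (mul_secondDiff_add_le_of_eq_max (ha x hxI i) (hbf x hxI i) (hE x hxI i)
        (supAbs_nonneg _) hi ((le_abs_self _).trans (hle _))
        ((le_abs_self _).trans (hle _))).trans_lt hr
    -- `-Λ` solves the same system with `E` replaced by `-E`.
    · have := mul_secondDiff_add_le_of_eq_max (vj := -Λ x (i + 1)) (vk := -Λ x (i - 1))
        (ha x hxI i) (hbf x hxI i) ((abs_neg (E x i)).trans_le (hE x hxI i))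
        (supAbs_nonneg _) hi ((neg_le_abs _).trans (hle _)) ((neg_le_abs _).trans (hle _))
      linarith
  intro t ht
  calc supAbs (Λ t) ≤ gronwallBound (supAbs (Λ 0)) b ε (t - 0) :=
        le_gronwallBound_of_liminf_deriv_right_le hcont hdini le_rfl (fun _ _ => le_rfl) t ht
    _ ≤ _ := by rw [sub_zero]; exact gronwallBound_le_mul_exp_add hb hε t

/-- Discrete parabolic maximum principle: if
`Λ̇ᵢ = aᵢ(t)(Λ_{i+1} - 2Λᵢ + Λ_{i-1}) + bᵢ(t)Λᵢ + Eᵢ(t)` with `aᵢ ≥ 0`,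
`|bᵢ| ≤ b`, `|Eᵢ| ≤ ε`, then
`maxᵢ |Λᵢ(t)| ≤ (maxᵢ |Λᵢ(0)|) e^{bt} + ε t e^{bt}` on `[0, T]`. -/
theorem stmt14 (N : ℕ) [NeZero N] (hN : 4 ≤ N) (Δθ : ℝ) (hΔθ : Δθ = 2 * π / N)
    (T b ε : ℝ) (hb : 0 ≤ b) (hε : 0 ≤ ε)
    (Λ a bf E : ℝ → ZMod N → ℝ)
    (ha : ∀ t ∈ Set.Icc (0:ℝ) T, ∀ i, 0 ≤ a t i)
    (hbf : ∀ t ∈ Set.Icc (0:ℝ) T, ∀ i, |bf t i| ≤ b)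
    (hE : ∀ t ∈ Set.Icc (0:ℝ) T, ∀ i, |E t i| ≤ ε)
    (hode : ∀ t ∈ Set.Icc (0:ℝ) T, ∀ i,
      HasDerivWithinAt (fun s => Λ s i)
        (a t i * (Λ t (i + 1) - 2 * Λ t i + Λ t (i - 1)) + bf t i * Λ t i + E t i)
        (Set.Icc 0 T) t) :
    ∀ t ∈ Set.Icc (0:ℝ) T,
      Finset.univ.sup' Finset.univ_nonempty (fun i : ZMod N => |Λ t i|) ≤
        Finset.univ.sup' Finset.univ_nonempty (fun i : ZMod N => |Λ 0 i|)
            * Real.exp (b * t)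
          + ε * t * Real.exp (b * t) :=
  stmt14_general N T b ε hb hε Λ a bf E ha hbf hE hode
end

section
/- Let κ : ℝ → ℝ be twice continuously differentiable and positive, and let r : ℝ → ℝ² satisfy r'(θ) = (-sin θ, cos θ)/κ(θ) for all θ. Fix θ₀ ∈ ℝ. For all sufficiently small Δθ > 0, the tangent line to r at θ₀ (the line through r(θ₀) with direction (-sin θ₀, cos θ₀)) and the tangent line to r at θ₀ + Δθ (the line through r(θ₀ + Δθ) with direction (-sin(θ₀+Δθ), cos(θ₀+Δθ))) intersect in a unique point p(Δθ), and as Δθ → 0⁺, ⟨p(Δθ) - r(θ₀), (-sin θ₀, cos θ₀)⟩ = (1/κ(θ₀))·[Δθ/2 - ((Δθ)²/6)·(κ'(θ₀)/κ(θ₀))] + O((Δθ)³). -/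
open Real Asymptotics Filter Topology

/-!
Let `g(Δ)` and `h(Δ)` be the coordinates of `r(θ₀ + Δ) - r(θ₀)` along the normal
`(cos, sin)(θ₀ + Δ)` and the tangent `(-sin, cos)(θ₀ + Δ)`. Pairing with the normal of the
second tangent line shows that the two tangent lines meet at `r(θ₀) + u • (-sin θ₀, cos θ₀)`
with `u = g(Δ) / sin Δ`. Since `r' = (-sin, cos)/κ`, the pair `(g, h)` solves
`g' = h`, `h' = ρ - g` with `ρ(Δ) = 1/κ(θ₀ + Δ)` and `g(0) = h(0) = 0`. Consequently
`g(Δ) - sin Δ · (ρ(0) Δ/2 + ρ'(0) Δ²/6)` has vanishing derivatives up to order three at `0`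
and a bounded fourth derivative, so it is `O(Δ⁴)`; dividing by `sin Δ ~ Δ` gives the expansion,
because `ρ(0) = 1/κ(θ₀)` and `ρ'(0) = -κ'(θ₀)/κ(θ₀)²`.
-/

theorem isBigO_pow_succ_of_hasDerivAt {E : Type*} [NormedAddCommGroup E] [NormedSpace ℝ E]
    {φ ψ : ℝ → E} {n : ℕ} (hφ0 : φ 0 = 0) (hφ : ∀ᶠ x in 𝓝 0, HasDerivAt φ (ψ x) x)
    (hψ : ψ =O[𝓝 0] (· ^ n)) : φ =O[𝓝 0] (· ^ (n + 1)) := by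
  obtain ⟨C, hC, hψC⟩ := hψ.exists_pos
  obtain ⟨ε, hε, hball⟩ := Metric.eventually_nhds_iff_ball.mp (hφ.and hψC.bound)
  refine IsBigO.of_bound C ?_
  filter_upwards [Metric.ball_mem_nhds 0 hε] with x hx
  have hsub : Metric.closedBall (0 : ℝ) |x| ⊆ Metric.ball 0 ε :=
    Metric.closedBall_subset_ball (by simpa using hx)
  have hmvt := (convex_closedBall (0 : ℝ) |x|).norm_image_sub_le_of_norm_hasDerivWithin_le
    (C := C * |x| ^ n) (fun y hy => (hball y (hsub hy)).1.hasDerivWithinAt)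
    (fun y hy => (hball y (hsub hy)).2.trans ?_)
    (Metric.mem_closedBall_self (abs_nonneg x)) (by simp : x ∈ Metric.closedBall (0 : ℝ) |x|)
  · simpa [hφ0, pow_succ, mul_assoc] using hmvt
  · simp only [Metric.mem_closedBall, dist_zero_right, norm_eq_abs] at hy
    simp only [norm_pow, norm_eq_abs]
    gcongr

theorem isBigO_div_sin_sub {φ T : ℝ → ℝ} {n : ℕ}
    (h : (fun x => φ x - sin x * T x) =O[𝓝 0] (· ^ (n + 1))) :
    (fun x => φ x / sin x - T x) =O[𝓝[≠] 0] (· ^ n) := by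
  have hinv : (fun x => (sin x)⁻¹) =O[𝓝 0] (fun x => x⁻¹) :=
    isEquivalent_sin.symm.isBigO.inv_rev (.of_forall fun x hx => by simp_all)
  have hsin : ∀ᶠ x in 𝓝[≠] (0 : ℝ), sin x ≠ 0 := (hasDerivAt_sin 0).eventually_ne (by simp)
  refine ((h.mul hinv).mono nhdsWithin_le_nhds).congr' ?_ ?_
  · filter_upwards [hsin] with x hx
    field_simp
  · filter_upwards [self_mem_nhdsWithin] with x (hx : x ≠ 0)
    field_simp
    ring

theorem isBigO_sub_sin_mul_of_hasDerivAt {g h ρ : ℝ → ℝ} (hρ : ContDiff ℝ 2 ρ)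
    (hg : ∀ x, HasDerivAt g (h x) x) (hh : ∀ x, HasDerivAt h (ρ x - g x) x)
    (hg0 : g 0 = 0) (hh0 : h 0 = 0) :
    (fun x => g x - sin x * (ρ 0 * x / 2 + deriv ρ 0 * x ^ 2 / 6)) =O[𝓝 0] (· ^ 4) := by
  set A := ρ 0
  set B := deriv ρ 0
  have hρ' : ContDiff ℝ 1 (deriv ρ) := ContDiff.deriv' (n := 1) hρ
  have hρ1 : ∀ x, HasDerivAt ρ (deriv ρ x) x :=
    fun x => (hρ.differentiable two_ne_zero x).hasDerivAt
  have hρ2 : ∀ x, HasDerivAt (deriv ρ) (deriv (deriv ρ) x) x :=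
    fun x => (hρ'.differentiable one_ne_zero x).hasDerivAt
  have hT : ∀ x : ℝ, HasDerivAt (fun x => A * x / 2 + B * x ^ 2 / 6) (A / 2 + B * x / 3) x :=
    fun x => ((((hasDerivAt_id x).const_mul A).div_const 2).add
      (((hasDerivAt_pow 2 x).const_mul B).div_const 6)).congr_deriv
        (by simp only [mul_one, Nat.cast_ofNat, Nat.add_one_sub_one, pow_one]; ring)
  have hT' : ∀ x : ℝ, HasDerivAt (fun x => A / 2 + B * x / 3) (B / 3) x :=
    fun x => ((((hasDerivAt_id x).const_mul B).div_const 3).const_add (A / 2)).congr_deriv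
      (by simp)
  have hgc : Continuous g := continuous_iff_continuousAt.2 fun x => (hg x).continuousAt
  -- `h4`, ..., `h1` are the successive derivatives of `g x - sin x * (A * x / 2 + B * x ^ 2 / 6)`,
  -- computed with `g'' = ρ - g`; all but the fourth vanish at `0`.
  have h4 : (fun x => deriv (deriv ρ) x - ρ x + g x - sin x * (A * x / 2 + B * x ^ 2 / 6)
      + 4 * (cos x * (A / 2 + B * x / 3)) + 2 * B * sin x) =O[𝓝 0] (· ^ 0) := by
    simp only [pow_zero]
    exact ((hρ'.continuous_deriv le_rfl).sub hρ.continuous |>.add hgc |>.sub (by fun_prop)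
      |>.add (by fun_prop) |>.add (by fun_prop)).continuousAt.tendsto.isBigO_one ℝ
  have h3 : (fun x => deriv ρ x - h x + cos x * (A * x / 2 + B * x ^ 2 / 6)
      + 3 * (sin x * (A / 2 + B * x / 3)) - B * cos x) =O[𝓝 0] (· ^ 1) :=
    isBigO_pow_succ_of_hasDerivAt (by simp [hh0, B]) (.of_forall fun x =>
      ((((hρ2 x).sub (hh x)).add ((hasDerivAt_cos x).mul (hT x))).add
        (((hasDerivAt_sin x).mul (hT' x)).const_mul 3)).sub
        ((hasDerivAt_cos x).const_mul B) |>.congr_deriv (by ring)) h4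
  have h2 : (fun x => ρ x - g x + sin x * (A * x / 2 + B * x ^ 2 / 6)
      - 2 * (cos x * (A / 2 + B * x / 3)) - B / 3 * sin x) =O[𝓝 0] (· ^ 2) :=
    isBigO_pow_succ_of_hasDerivAt (by simp [hg0, A]; ring) (.of_forall fun x =>
      ((((hρ1 x).sub (hg x)).add ((hasDerivAt_sin x).mul (hT x))).sub
        (((hasDerivAt_cos x).mul (hT' x)).const_mul 2)).sub
        ((hasDerivAt_sin x).const_mul (B / 3)) |>.congr_deriv (by ring)) h3
  have h1 : (fun x => h x - cos x * (A * x / 2 + B * x ^ 2 / 6)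
      - sin x * (A / 2 + B * x / 3)) =O[𝓝 0] (· ^ 3) :=
    isBigO_pow_succ_of_hasDerivAt (by simp [hh0]) (.of_forall fun x =>
      ((hh x).sub ((hasDerivAt_cos x).mul (hT x))).sub
        ((hasDerivAt_sin x).mul (hT' x)) |>.congr_deriv (by ring)) h2
  exact isBigO_pow_succ_of_hasDerivAt (by simp [hg0]) (.of_forall fun x =>
    (hg x).sub ((hasDerivAt_sin x).mul (hT x)) |>.congr_deriv (by ring)) h1

/-- The parameter `s` at which the line `A + s • (-sin α, cos α)` meets the line through `B`
with direction `(-sin β, cos β)`, found by pairing with the normal `(cos β, sin β)`. -/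
noncomputable def lineMeetParam (A B : ℝ × ℝ) (α β : ℝ) : ℝ :=
  ((B - A).1 * cos β + (B - A).2 * sin β) / sin (β - α)

theorem exists_add_lineMeetParam_smul_eq (A B : ℝ × ℝ) {α β : ℝ} (h : sin (β - α) ≠ 0) :
    ∃ s : ℝ, A + lineMeetParam A B α β • (-sin α, cos α) = B + s • (-sin β, cos β) := by
  set u := lineMeetParam A B α β
  have hu : u * sin (β - α) = (B - A).1 * cos β + (B - A).2 * sin β := div_mul_cancel₀ _ h
  rw [sin_sub, Prod.fst_sub, Prod.snd_sub] at hu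
  set v := A + u • (-sin α, cos α) - B
  refine ⟨-v.1 * sin β + v.2 * cos β, Prod.ext ?_ ?_⟩ <;>
    simp only [v, Prod.fst_add, Prod.snd_add, Prod.fst_sub, Prod.snd_sub, Prod.smul_mk,
      smul_eq_mul]
  · linear_combination cos β * hu - (A.1 + u * -sin α - B.1) * sin_sq_add_cos_sq β
  · linear_combination sin β * hu - (A.2 + u * cos α - B.2) * sin_sq_add_cos_sq β

theorem eq_add_lineMeetParam_smul (A B : ℝ × ℝ) {α β : ℝ} (h : sin (β - α) ≠ 0) {q : ℝ × ℝ}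
    (hA : ∃ s : ℝ, q = A + s • (-sin α, cos α)) (hB : ∃ s : ℝ, q = B + s • (-sin β, cos β)) :
    q = A + lineMeetParam A B α β • (-sin α, cos α) := by
  obtain ⟨a, rfl⟩ := hA
  obtain ⟨b, hb⟩ := hB
  have h1 := congrArg Prod.fst hb
  have h2 := congrArg Prod.snd hb
  simp only [Prod.fst_add, Prod.snd_add, Prod.smul_mk, smul_eq_mul] at h1 h2
  have ha : a = lineMeetParam A B α β := by
    rw [lineMeetParam, eq_div_iff h, sin_sub, Prod.fst_sub, Prod.snd_sub]
    linear_combination cos β * h1 + sin β * h2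
  rw [ha]

noncomputable def normalCoord (r : ℝ → ℝ × ℝ) (c : ℝ × ℝ) (θ : ℝ) : ℝ :=
  (r θ - c).1 * cos θ + (r θ - c).2 * sin θ

noncomputable def tangentCoord (r : ℝ → ℝ × ℝ) (c : ℝ × ℝ) (θ : ℝ) : ℝ :=
  (r θ - c).1 * (-sin θ) + (r θ - c).2 * cos θ

theorem hasDerivAt_normalCoord {κ : ℝ → ℝ} {r : ℝ → ℝ × ℝ}
    (hr : ∀ θ, HasDerivAt r (-sin θ / κ θ, cos θ / κ θ) θ) (c : ℝ × ℝ) (θ : ℝ) :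
    HasDerivAt (normalCoord r c) (tangentCoord r c θ) θ := by
  have h1 : HasDerivAt (fun θ => (r θ).1) (-sin θ / κ θ) θ := (hr θ).fst
  have h2 : HasDerivAt (fun θ => (r θ).2) (cos θ / κ θ) θ := (hr θ).snd
  refine (((h1.sub_const c.1).mul (hasDerivAt_cos θ)).add
    ((h2.sub_const c.2).mul (hasDerivAt_sin θ))).congr_deriv ?_
  simp only [tangentCoord, Prod.fst_sub, Prod.snd_sub]
  ring

theorem hasDerivAt_tangentCoord {κ : ℝ → ℝ} {r : ℝ → ℝ × ℝ}
    (hr : ∀ θ, HasDerivAt r (-sin θ / κ θ, cos θ / κ θ) θ) (c : ℝ × ℝ) {θ : ℝ}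
    (hκ : κ θ ≠ 0) : HasDerivAt (tangentCoord r c) ((κ θ)⁻¹ - normalCoord r c θ) θ := by
  have h1 : HasDerivAt (fun θ => (r θ).1) (-sin θ / κ θ) θ := (hr θ).fst
  have h2 : HasDerivAt (fun θ => (r θ).2) (cos θ / κ θ) θ := (hr θ).snd
  refine (((h1.sub_const c.1).mul (hasDerivAt_sin θ).neg).add
    ((h2.sub_const c.2).mul (hasDerivAt_cos θ))).congr_deriv ?_
  simp only [normalCoord, Prod.fst_sub, Prod.snd_sub, Pi.neg_apply]
  field_simp
  linear_combination sin_sq_add_cos_sq θ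

/-- For a convex curve `r` parametrized by the normal angle (so
`r'(θ) = (-sin θ, cos θ)/κ(θ)` with `κ > 0` of class `C²`), for all small
`Δθ > 0` the tangent lines at `θ₀` and `θ₀ + Δθ` meet in a unique point
`p(Δθ)`, and
`⟨p(Δθ) - r(θ₀), (-sin θ₀, cos θ₀)⟩
  = (1/κ(θ₀))[Δθ/2 - ((Δθ)²/6)(κ'(θ₀)/κ(θ₀))] + O((Δθ)³)` as `Δθ → 0⁺`. -/
theorem stmt18 (κ : ℝ → ℝ) (hκ : ContDiff ℝ 2 κ) (hκpos : ∀ θ, 0 < κ θ)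
    (r : ℝ → ℝ × ℝ)
    (hr : ∀ θ : ℝ, HasDerivAt r (-Real.sin θ / κ θ, Real.cos θ / κ θ) θ)
    (θ₀ : ℝ) :
    ∃ ε > (0:ℝ), ∃ p : ℝ → ℝ × ℝ,
      (∀ Δθ ∈ Set.Ioo (0:ℝ) ε,
        ((∃ s : ℝ, p Δθ = r θ₀ + s • (-Real.sin θ₀, Real.cos θ₀)) ∧
         (∃ s : ℝ, p Δθ = r (θ₀ + Δθ)
            + s • (-Real.sin (θ₀ + Δθ), Real.cos (θ₀ + Δθ)))) ∧
        (∀ q : ℝ × ℝ,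
          ((∃ s : ℝ, q = r θ₀ + s • (-Real.sin θ₀, Real.cos θ₀)) ∧
           (∃ s : ℝ, q = r (θ₀ + Δθ)
              + s • (-Real.sin (θ₀ + Δθ), Real.cos (θ₀ + Δθ)))) → q = p Δθ)) ∧
      ((fun Δθ => ((p Δθ - r θ₀).1 * (-Real.sin θ₀) + (p Δθ - r θ₀).2 * Real.cos θ₀)
          - (1 / κ θ₀) * (Δθ / 2 - Δθ ^ 2 / 6 * (deriv κ θ₀ / κ θ₀)))
        =O[nhdsWithin (0:ℝ) (Set.Ioi 0)] fun Δθ => Δθ ^ 3) := by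
  have hκ0 : ∀ θ, κ θ ≠ 0 := fun θ => (hκpos θ).ne'
  set ρ : ℝ → ℝ := fun Δ => (κ (θ₀ + Δ))⁻¹
  have hρ : ContDiff ℝ 2 ρ := (hκ.comp (contDiff_const.add contDiff_id)).inv fun Δ => hκ0 _
  have hρ'0 : deriv ρ 0 = -deriv κ θ₀ / κ θ₀ ^ 2 := by
    have h : HasDerivAt ρ (-deriv κ (θ₀ + 0) / κ (θ₀ + 0) ^ 2) 0 :=
      ((hκ.differentiable two_ne_zero _).hasDerivAt.comp_const_add θ₀ 0).inv (hκ0 _)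
    simpa using h.deriv
  have hg := isBigO_sub_sin_mul_of_hasDerivAt hρ
    (g := fun Δ => normalCoord r (r θ₀) (θ₀ + Δ)) (h := fun Δ => tangentCoord r (r θ₀) (θ₀ + Δ))
    (fun Δ => (hasDerivAt_normalCoord hr _ _).comp_const_add θ₀ Δ)
    (fun Δ => (hasDerivAt_tangentCoord hr _ (hκ0 _)).comp_const_add θ₀ Δ)
    (by simp [normalCoord]) (by simp [tangentCoord])
  refine ⟨π, pi_pos,
    fun Δ => r θ₀ + lineMeetParam (r θ₀) (r (θ₀ + Δ)) θ₀ (θ₀ + Δ) • (-sin θ₀, cos θ₀),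
    fun Δ hΔ => ?_, ?_⟩
  · have hsin : sin (θ₀ + Δ - θ₀) ≠ 0 := by
      rw [add_sub_cancel_left]
      exact (sin_pos_of_pos_of_lt_pi hΔ.1 hΔ.2).ne'
    obtain ⟨s, hs⟩ := exists_add_lineMeetParam_smul_eq (r θ₀) (r (θ₀ + Δ)) hsin
    exact ⟨⟨⟨_, rfl⟩, s, hs⟩, fun q ⟨hA, hB⟩ => eq_add_lineMeetParam_smul _ _ hsin hA hB⟩
  · have hproj : ∀ u : ℝ, (r θ₀ + u • (-sin θ₀, cos θ₀) - r θ₀).1 * -sin θ₀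
        + (r θ₀ + u • (-sin θ₀, cos θ₀) - r θ₀).2 * cos θ₀ = u := fun u => by
      simp only [add_sub_cancel_left, Prod.smul_mk, smul_eq_mul]
      linear_combination u * sin_sq_add_cos_sq θ₀
    have hu : ∀ Δ, lineMeetParam (r θ₀) (r (θ₀ + Δ)) θ₀ (θ₀ + Δ)
        = normalCoord r (r θ₀) (θ₀ + Δ) / sin Δ := fun Δ => by
      rw [lineMeetParam, add_sub_cancel_left, normalCoord]
    refine ((isBigO_div_sin_sub hg).mono
      (nhdsWithin_mono _ fun x (hx : 0 < x) => hx.ne')).congr_left fun Δ => ?_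
    rw [hproj, hu, hρ'0]
    simp only [ρ, add_zero]
    ring
end
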